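/- Consider the multi-parameter random simplicial complex K(n;p) with parameters p_1,...,p_{k*+1} ∈ [0,1] in which p_1 = ··· = p_{q-1} = 1, fix q+1 ≤ m ≤ n designated vertices (say 1,...,m), and let A be the event that all C(m,q+1) q-simplices on these m vertices are present in K(n;p). Then, conditionally on A, any fixed set of k*+1 of the m designated vertices forms a free k*-simplex in K(n;p) with probability ∏_{i=q+1}^{k*} p_i^{C(k*+1,i+1)} · ( 1 - ∏_{i=q+1}^{k*+1} p_i^{C(k*+1,i)} )^{m-(k*+1)} · ( 1 - ∏_{i=q}^{k*+1} p_i^{C(k*+1,i)} )^{n-m}, and this probability does not depend on the choice of the k*+1 vertices. -/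

import Mathlib

open scoped BigOperators

/-- A finite abstract simplicial complex: a nonempty family of nonempty finite subsets of `ℕ`
(the simplices), closed under taking nonempty subsets. -/
structure SComplex where
  faces : Finset (Finset ℕ)
  faces_nonempty : faces.Nonempty
  empty_not_mem : ∅ ∉ faces
  down_closed : ∀ s ∈ faces, ∀ t : Finset ℕ, t ⊆ s → t ≠ ∅ → t ∈ faces

namespace SComplex

/-- The vertex set of a simplicial complex. -/
def verts (F : SComplex) : Finset ℕ := F.faces.sup id

/-- The finset of `i`-simplices (simplices with `i+1` vertices). -/
def simplices (F : SComplex) (i : ℕ) : Finset (Finset ℕ) :=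
  F.faces.filter fun s => s.card = i + 1

/-- `s i F` is the number of `i`-simplices of `F`. -/
def s (F : SComplex) (i : ℕ) : ℕ := (F.simplices i).card

/-- The dimension of a simplicial complex: the largest `i` with an `i`-simplex. -/
def dim (F : SComplex) : ℕ := F.faces.sup Finset.card - 1

/-- `H` is a subcomplex of `F`. -/
def IsSubcomplex (H F : SComplex) : Prop := H.faces ⊆ F.faces

/-- An ordered copy of `G` in `F`: an injective map on the vertices of `G` (normalized to `0`
off the vertex set of `G`) mapping the vertex set of every simplex of `G` onto the vertex set
of a simplex of `F` (necessarily of the same dimension). -/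
def IsOrderedCopy (F G : SComplex) (φ : ℕ → ℕ) : Prop :=
  Set.InjOn φ ↑G.verts ∧ (∀ v ∉ G.verts, φ v = 0) ∧
    ∀ t ∈ G.faces, t.image φ ∈ F.faces

/-- `nOrdered F G` is the number of ordered copies of `G` in `F`. -/
noncomputable def nOrdered (F G : SComplex) : ℕ :=
  Set.ncard {φ : ℕ → ℕ | IsOrderedCopy F G φ}

/-- `F` is isomorphic to `G`. -/
def Iso (F G : SComplex) : Prop :=
  ∃ φ : ℕ → ℕ, Set.InjOn φ ↑G.verts ∧ F.faces = G.faces.image (Finset.image φ)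

/-- `nCopies F G` is the number of unordered copies of `G` in `F`, i.e. the number of
subcomplexes of `F` isomorphic to `G`. -/
noncomputable def nCopies (F G : SComplex) : ℕ :=
  Set.ncard {H : SComplex | H.IsSubcomplex F ∧ H.Iso G}

/-- `Nmax m k G` is the maximum of `nCopies F G` over all simplicial complexes `F` with
`s i F ≤ m i` for every `i ≤ k` (the extremal parameter `N(m₀,…,m_k;G)`). -/
noncomputable def Nmax (m : ℕ → ℕ) (k : ℕ) (G : SComplex) : ℕ :=
  sSup {t : ℕ | ∃ F : SComplex, (∀ i ≤ k, F.s i ≤ m i) ∧ t = nCopies F G}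

/-- `gammaLP m k G` is the optimal value of the linear program: maximize `∑_{v ∈ G₀} x v`
subject to `0 ≤ ∑_{v ∈ σ} x v ≤ log (m i)` for every `i`-simplex `σ` of `G`, `i ≤ k`. -/
noncomputable def gammaLP (m : ℕ → ℕ) (k : ℕ) (G : SComplex) : ℝ :=
  sSup {t : ℝ | ∃ x : ℕ → ℝ,
    (∀ i ≤ k, ∀ σ ∈ G.simplices i,
        0 ≤ ∑ v ∈ σ, x v ∧ ∑ v ∈ σ, x v ≤ Real.log (m i)) ∧
    t = ∑ v ∈ G.verts, x v}

/-- The potential `i`-simplices on vertex set `{1,…,n}` given the complex `K`: the `(i+1)`-sets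
all of whose `i`-element subsets (the `(i-1)`-dimensional boundary faces) belong to `K`. -/
def potentialSimplices (n i : ℕ) (K : SComplex) : Finset (Finset ℕ) :=
  ((Finset.Icc 1 n).powersetCard (i + 1)).filter
    fun σ => ∀ t ∈ σ.powersetCard i, t ∈ K.faces

/-- The probability that the multi-parameter random simplicial complex `K(n; p₁,…,p_k)` on
vertex set `{1,…,n}` equals the complex `K`. -/
noncomputable def complexProb (n k : ℕ) (p : ℕ → ℝ) (K : SComplex) : ℝ :=
  if K.verts = Finset.Icc 1 n ∧ ∀ t ∈ K.faces, t.card ≤ k + 1 then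
    ∏ i ∈ Finset.Icc 1 k,
      p i ^ K.s i * (1 - p i) ^ ((potentialSimplices n i K).card - K.s i)
  else 0

/-- The probability of an event `A` under the multi-parameter random simplicial complex. -/
noncomputable def pr (n k : ℕ) (p : ℕ → ℝ) (A : Set SComplex) : ℝ :=
  ∑' K : SComplex, A.indicator (complexProb n k p) K

/-- The expectation of `f` under the multi-parameter random simplicial complex. -/
noncomputable def expec (n k : ℕ) (p : ℕ → ℝ) (f : SComplex → ℝ) : ℝ :=
  ∑' K : SComplex, complexProb n k p K * f K

/-- `μ_{o,n}(G) = (n)_{s₀(G)} ∏_{i=1}^k p_i^{s_i(G)}`. -/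
noncomputable def muo (n k : ℕ) (p : ℕ → ℝ) (G : SComplex) : ℝ :=
  (n.descFactorial (G.s 0) : ℝ) * ∏ i ∈ Finset.Icc 1 k, p i ^ G.s i

/-- `Ψ_{G,n} = n^{s₀(G)} ∏_{i=1}^k p_i^{s_i(G)}`. -/
noncomputable def Psi (n k : ℕ) (p : ℕ → ℝ) (G : SComplex) : ℝ :=
  (n : ℝ) ^ G.s 0 * ∏ i ∈ Finset.Icc 1 k, p i ^ G.s i

/-- `M*_{G,n}(p₁,…,p_k)`: the largest integer `m` with `1 ≤ m ≤ C(n,k+1)/s_k(G)` such that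
`N(n, m·s₁(G), …, m·s_k(G); H) ≤ Ψ_{H,n}` for every (non-empty) subcomplex `H` of `G`. -/
noncomputable def Mstar (n k : ℕ) (p : ℕ → ℝ) (G : SComplex) : ℕ :=
  sSup {m : ℕ | 1 ≤ m ∧ m * G.s k ≤ n.choose (k + 1) ∧
    ∀ H : SComplex, H.IsSubcomplex G →
      (Nmax (fun i => if i = 0 then n else m * G.s i) k H : ℝ) ≤ Psi n k p H}

/-- `σ_k`: the complete simplicial complex of dimension `k` on the `k+1` vertices `{1,…,k+1}`. -/
def simplexComplex (k : ℕ) : SComplex where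
  faces := (Finset.Icc 1 (k + 1)).powerset.filter fun s => s ≠ ∅
  faces_nonempty := ⟨{1}, by
    simp only [Finset.mem_filter, Finset.mem_powerset, Finset.singleton_subset_iff,
      Finset.mem_Icc]
    exact ⟨⟨le_refl 1, Nat.le_add_left 1 k⟩, by simp⟩⟩
  empty_not_mem := by simp
  down_closed := by
    intro s hs t hts htne
    simp only [Finset.mem_filter, Finset.mem_powerset] at hs ⊢
    exact ⟨hts.trans hs.1, htne⟩

/-- The `q`-skeleton of a simplicial complex: all simplices of dimension at most `q`. -/
def skeleton (F : SComplex) (q : ℕ) : SComplex where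
  faces := F.faces.filter fun s => s.card ≤ q + 1
  faces_nonempty := by
    obtain ⟨t, ht⟩ := F.faces_nonempty
    have htne : t ≠ ∅ := fun h => F.empty_not_mem (h ▸ ht)
    obtain ⟨v, hv⟩ := Finset.nonempty_iff_ne_empty.2 htne
    refine ⟨{v}, ?_⟩
    simp only [Finset.mem_filter]
    exact ⟨F.down_closed t ht {v} (Finset.singleton_subset_iff.2 hv) (by simp),
      by simp⟩
  empty_not_mem := fun h => F.empty_not_mem (Finset.mem_filter.1 h).1
  down_closed := by
    intro t ht u hut hune
    rw [Finset.mem_filter] at ht ⊢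
    exact ⟨F.down_closed t ht.1 u hut hune, le_trans (Finset.card_le_card hut) ht.2⟩

open Classical in
/-- The simplicial boundary matrix `∂_j : C_j → C_{j-1}` over `ℚ`, with the usual signs
determined by the ordering of the vertices. -/
noncomputable def boundaryMatrix (K : SComplex) (j : ℕ) :
    Matrix ↥(K.simplices (j - 1)) ↥(K.simplices j) ℚ :=
  fun τ σ =>
    if τ.1 ⊆ σ.1 then
      (-1 : ℚ) ^ ((σ.1.filter fun w : ℕ => (w : WithBot ℕ) < (σ.1 \ τ.1).min).card)
    else 0

/-- The `j`-th Betti number of `K` (over `ℚ`):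
`β_j = dim ker ∂_j - rank ∂_{j+1} = s_j(K) - rank ∂_j - rank ∂_{j+1}`. -/
noncomputable def betti (K : SComplex) (j : ℕ) : ℕ :=
  K.s j - (K.boundaryMatrix j).rank - (K.boundaryMatrix (j + 1)).rank

/-- The number of free `j`-simplices of `K`: `j`-simplices not contained in any strictly
larger simplex of `K`. -/
def freeCount (K : SComplex) (j : ℕ) : ℕ :=
  ((K.simplices j).filter fun t => ∀ u ∈ K.faces, t ⊆ u → u = t).card

end SComplex

open SComplex


section AuxiliaryCoinModel

open scoped Classical


open Finset

section CoinLemmas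

variable {ι : Type*} [Fintype ι] [DecidableEq ι] (wt : ι → Bool → ℝ)

/-- Cylinder sum: the total weight of configurations with prescribed values on `C`. -/
lemma sum_cylinder (hwt : ∀ T, wt T true + wt T false = 1) (C : Finset ι) (b : ι → Bool) :
    ∑ X : ι → Bool, (if ∀ T ∈ C, X T = b T then ∏ T, wt T (X T) else 0)
      = ∏ T ∈ C, wt T (b T) := by
  classical
  have hterm : ∀ X : ι → Bool,
      (if ∀ T ∈ C, X T = b T then ∏ T, wt T (X T) else 0)
        = ∏ T, (if T ∈ C then (if X T = b T then wt T (X T) else 0) else wt T (X T)) := by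
    intro X
    split_ifs with h
    · exact Finset.prod_congr rfl fun T _ => by
        by_cases hT : T ∈ C <;> simp [hT, h T]
    · push_neg at h
      obtain ⟨T0, hT0, hneq⟩ := h
      exact (Finset.prod_eq_zero (Finset.mem_univ T0) (by simp [hT0, hneq])).symm
  rw [Finset.sum_congr rfl fun X _ => hterm X, ← Fintype.prod_sum
    (f := fun T c => if T ∈ C then (if c = b T then wt T c else 0) else wt T c)]
  rw [← Finset.prod_filter_mul_prod_filter_not Finset.univ (· ∈ C)]
  have h2 : ∀ T ∈ Finset.univ.filter (· ∉ C),
      (∑ c, if T ∈ C then (if c = b T then wt T c else 0) else wt T c) = 1 := by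
    intro T hT
    simp only [Finset.mem_filter] at hT
    simp [hT.2, Fintype.sum_bool, hwt T]
  rw [Finset.prod_congr rfl h2, Finset.prod_const_one, mul_one]
  have h1 : ∀ T ∈ Finset.univ.filter (· ∈ C),
      (∑ c, if T ∈ C then (if c = b T then wt T c else 0) else wt T c) = wt T (b T) := by
    intro T hT
    simp only [Finset.mem_filter] at hT
    cases hb : b T <;> simp [hT.2, Fintype.sum_bool, hb]
  rw [Finset.prod_congr rfl h1]
  congr 1
  simp [Finset.filter_mem_eq_inter]

end CoinLemmas

section Free

variable {ι : Type*} [Fintype ι] [DecidableEq ι] {κ : Type*} [DecidableEq κ]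

/-- Main independence computation: prescribed coins on `C`, and for each `v` in `V` not all
coins of the block `D v` are true. -/
lemma sum_free (wt : ι → Bool → ℝ) (hwt : ∀ T, wt T true + wt T false = 1)
    (V : Finset κ) (D : κ → Finset ι)
    (hDD : ∀ v ∈ V, ∀ u ∈ V, v ≠ u → Disjoint (D v) (D u)) :
    ∀ C : Finset ι, (∀ v ∈ V, Disjoint C (D v)) →
    (∑ X : ι → Bool, if (∀ T ∈ C, X T = true) ∧ (∀ v ∈ V, ¬ ∀ T ∈ D v, X T = true)
        then ∏ T, wt T (X T) else 0)
      = (∏ T ∈ C, wt T true) * ∏ v ∈ V, (1 - ∏ T ∈ D v, wt T true) := by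
  classical
  induction V using Finset.induction with
  | empty =>
    intro C _
    simpa using sum_cylinder wt hwt C (fun _ => true)
  | @insert a V' ha ih =>
    intro C hCD
    have hDD' : ∀ v ∈ V', ∀ u ∈ V', v ≠ u → Disjoint (D v) (D u) := by
      intro v hv u hu
      exact hDD v (Finset.mem_insert_of_mem hv) u (Finset.mem_insert_of_mem hu)
    have key : ∀ X : ι → Bool,
        (if (∀ T ∈ C, X T = true) ∧ (∀ v ∈ insert a V', ¬ ∀ T ∈ D v, X T = true)
          then ∏ T, wt T (X T) else 0)
        = (if (∀ T ∈ C, X T = true) ∧ (∀ v ∈ V', ¬ ∀ T ∈ D v, X T = true)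
            then ∏ T, wt T (X T) else 0)
          - (if (∀ T ∈ C ∪ D a, X T = true) ∧ (∀ v ∈ V', ¬ ∀ T ∈ D v, X T = true)
            then ∏ T, wt T (X T) else 0) := by
      intro X
      simp only [Finset.forall_mem_insert, Finset.forall_mem_union]
      split_ifs
      all_goals try ring
      all_goals (exfalso; tauto)
    rw [Finset.sum_congr rfl fun X _ => key X, Finset.sum_sub_distrib]
    rw [ih hDD' C (fun v hv => hCD v (Finset.mem_insert_of_mem hv)),
      ih hDD' (C ∪ D a) ?_]
    · rw [Finset.prod_union (hCD a (Finset.mem_insert_self a V'))]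
      rw [Finset.prod_insert ha]
      ring
    · intro v hv
      refine Finset.disjoint_union_left.2 ⟨hCD v (Finset.mem_insert_of_mem hv), ?_⟩
      exact hDD a (Finset.mem_insert_self a V') v (Finset.mem_insert_of_mem hv)
        (fun h => ha (h ▸ hv))

end Free


section CoinModel

open Finset

/-- The index set of coins: potential simplices of dimension `1..k` inside `{1,…,n}`. -/
def coinSet (n k : ℕ) : Finset (Finset ℕ) :=
  (Finset.Icc 1 n).powerset.filter fun T => 2 ≤ T.card ∧ T.card ≤ k + 1

lemma mem_coinSet {n k : ℕ} {T : Finset ℕ} :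
    T ∈ coinSet n k ↔ T ⊆ Finset.Icc 1 n ∧ 2 ≤ T.card ∧ T.card ≤ k + 1 := by
  simp [coinSet, Finset.mem_filter, Finset.mem_powerset, and_assoc]

/-- The weight of one coin taking value `b`. -/
noncomputable def cwt (p : ℕ → ℝ) (T : Finset ℕ) (b : Bool) : ℝ :=
  if b then p (T.card - 1) else 1 - p (T.card - 1)

lemma cwt_total (p : ℕ → ℝ) (T : Finset ℕ) : cwt p T true + cwt p T false = 1 := by
  simp [cwt]

/-- The weight of a coin configuration. -/
noncomputable def cw (n k : ℕ) (p : ℕ → ℝ) (X : {T // T ∈ coinSet n k} → Bool) : ℝ :=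
  ∏ T : {T // T ∈ coinSet n k}, cwt p T.1 (X T)

/-- The simplicial complex determined by a coin configuration. -/
def clos (n k : ℕ) (hn : 1 ≤ n) (X : {T // T ∈ coinSet n k} → Bool) : SComplex where
  faces := (Finset.Icc 1 n).powerset.filter fun s =>
    s ≠ ∅ ∧ s.card ≤ k + 1 ∧ ∀ T : {T // T ∈ coinSet n k}, T.1 ⊆ s → X T = true
  faces_nonempty := by
    classical
    refine ⟨{1}, ?_⟩
    simp only [Finset.mem_filter, Finset.mem_powerset]
    refine ⟨by simpa using hn, by simp, by simp, ?_⟩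
    intro T hT
    have h2 := (mem_coinSet.1 T.2).2.1
    have := Finset.card_le_card hT
    simp at this; omega
  empty_not_mem := by simp
  down_closed := by
    classical
    intro s hs t hts htne
    simp only [Finset.mem_filter, Finset.mem_powerset] at hs ⊢
    exact ⟨hts.trans hs.1, htne, le_trans (Finset.card_le_card hts) hs.2.2.1,
      fun T hT => hs.2.2.2 T (hT.trans hts)⟩

lemma mem_clos {n k : ℕ} {hn : 1 ≤ n} {X : {T // T ∈ coinSet n k} → Bool} {s : Finset ℕ} :
    s ∈ (clos n k hn X).faces ↔
      s ⊆ Finset.Icc 1 n ∧ s ≠ ∅ ∧ s.card ≤ k + 1 ∧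
        ∀ T : {T // T ∈ coinSet n k}, T.1 ⊆ s → X T = true := by
  classical
  simp [clos, Finset.mem_filter, Finset.mem_powerset, and_assoc]

lemma subset_verts {K : SComplex} {t : Finset ℕ} (ht : t ∈ K.faces) : t ⊆ K.verts := by
  intro x hx
  rw [SComplex.verts, Finset.mem_sup]
  exact ⟨t, ht, hx⟩

lemma verts_clos {n k : ℕ} (hn : 1 ≤ n) (X : {T // T ∈ coinSet n k} → Bool) :
    (clos n k hn X).verts = Finset.Icc 1 n := by
  apply Finset.Subset.antisymm
  · intro v hv
    rw [SComplex.verts, Finset.mem_sup] at hv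
    obtain ⟨t, ht, hvt⟩ := hv
    exact (mem_clos.1 ht).1 hvt
  · intro v hv
    have h1 : {v} ∈ (clos n k hn X).faces := by
      refine mem_clos.2 ⟨by simpa using hv, by simp, by simp, ?_⟩
      intro T hT
      have h2 := (mem_coinSet.1 T.2).2.1
      have := Finset.card_le_card hT
      simp at this; omega
    exact subset_verts h1 (Finset.mem_singleton_self v)

lemma SComplex.ext' {K L : SComplex} (h : K.faces = L.faces) : K = L := by
  cases K; cases L; simp_all

lemma singleton_mem_faces {K : SComplex} {v : ℕ} (hv : v ∈ K.verts) : {v} ∈ K.faces := by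
  rw [SComplex.verts, Finset.mem_sup] at hv
  obtain ⟨t, ht, hvt⟩ := hv
  exact K.down_closed t ht {v} (Finset.singleton_subset_iff.2 hvt) (by simp)

open Finset in
/-- The coins that are "observed" when building `K`: potential simplices of any dimension. -/
noncomputable def potAll (n k : ℕ) (K : SComplex) : Finset {T // T ∈ coinSet n k} :=
  Finset.univ.filter fun T => ∀ T' ∈ Finset.powersetCard (T.1.card - 1) T.1, T' ∈ K.faces

lemma mem_potAll {n k : ℕ} {K : SComplex} {T : {T // T ∈ coinSet n k}} :
    T ∈ potAll n k K ↔ ∀ T' ∈ Finset.powersetCard (T.1.card - 1) T.1, T' ∈ K.faces := by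
  simp [potAll]

lemma mem_potentialSimplices {n i : ℕ} {K : SComplex} {σ : Finset ℕ} :
    σ ∈ potentialSimplices n i K ↔
      σ ⊆ Finset.Icc 1 n ∧ σ.card = i + 1 ∧ ∀ t ∈ Finset.powersetCard i σ, t ∈ K.faces := by
  simp [SComplex.potentialSimplices, Finset.mem_filter, Finset.mem_powersetCard, and_assoc]

lemma clos_eq_iff {n k : ℕ} (hn : 1 ≤ n) (X : {T // T ∈ coinSet n k} → Bool) (K : SComplex)
    (hv : K.verts = Finset.Icc 1 n) (hd : ∀ t ∈ K.faces, t.card ≤ k + 1) :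
    clos n k hn X = K ↔ ∀ T ∈ potAll n k K, X T = decide (T.1 ∈ K.faces) := by
  classical
  constructor
  · rintro rfl
    intro T hT
    rw [mem_potAll] at hT
    by_cases hTK : T.1 ∈ (clos n k hn X).faces
    · simp only [hTK, decide_eq_true_eq, decide_eq_true]
      exact (mem_clos.1 hTK).2.2.2 T (Finset.Subset.refl _)
    · have : decide (T.1 ∈ (clos n k hn X).faces) = false := by simp [hTK]
      rw [this]
      by_contra hX
      rw [Bool.not_eq_false] at hX
      apply hTK
      obtain ⟨hsub, h2, hk1⟩ := mem_coinSet.1 T.2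
      refine mem_clos.2 ⟨hsub, ?_, hk1, ?_⟩
      · intro h; rw [h] at h2; simp at h2
      · intro T' hT'
        rcases eq_or_ne T'.1 T.1 with he | he
        · have hTT : T' = T := Subtype.ext he
          rw [hTT]; exact hX
        · have hss : T'.1 ⊂ T.1 := Finset.ssubset_iff_subset_ne.2 ⟨hT', he⟩
          have hlt := Finset.card_lt_card hss
          obtain ⟨u, hu1, hu2, hu3⟩ := Finset.exists_subsuperset_card_eq hT'
            (by omega : T'.1.card ≤ T.1.card - 1) (by omega)
          have humem : u ∈ (clos n k hn X).faces :=
            hT u (Finset.mem_powersetCard.2 ⟨hu2, hu3⟩)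
          exact (mem_clos.1 humem).2.2.2 T' hu1
  · intro hX
    apply SComplex.ext'
    ext s
    constructor
    · suffices H : ∀ N (s : Finset ℕ), s.card ≤ N → s ∈ (clos n k hn X).faces → s ∈ K.faces by
        exact fun hs => H s.card s le_rfl hs
      intro N
      induction N with
      | zero =>
        intro s hcard hs
        obtain ⟨_, hne, _, _⟩ := mem_clos.1 hs
        exact absurd (Finset.card_eq_zero.1 (Nat.le_zero.1 hcard)) hne
      | succ N ihN =>
        intro s hcard hs
        obtain ⟨hsub, hne, hk, hcoin⟩ := mem_clos.1 hs
        by_cases h1 : s.card ≤ 1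
        · obtain ⟨v, hv'⟩ := Finset.card_eq_one.1
            (le_antisymm h1 (Finset.card_pos.2 (Finset.nonempty_iff_ne_empty.2 hne)))
          subst hv'
          apply singleton_mem_faces
          rw [hv]
          exact hsub (Finset.mem_singleton_self v)
        · have hTmem : s ∈ coinSet n k := mem_coinSet.2 ⟨hsub, by omega, hk⟩
          have hpot : (⟨s, hTmem⟩ : {T // T ∈ coinSet n k}) ∈ potAll n k K := by
            rw [mem_potAll]
            intro T' hT'
            rw [Finset.mem_powersetCard] at hT'
            have hT'c : T'.card = s.card - 1 := hT'.2
            have hT'mem : T' ∈ (clos n k hn X).faces := by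
              apply (clos n k hn X).down_closed s hs T' hT'.1
              apply Finset.nonempty_iff_ne_empty.1
              apply Finset.card_pos.1
              omega
            exact ihN T' (by omega) hT'mem
          have hXT := hX ⟨s, hTmem⟩ hpot
          rw [hcoin ⟨s, hTmem⟩ (Finset.Subset.refl s)] at hXT
          simpa using hXT.symm
    · intro hs
      have hsub : s ⊆ Finset.Icc 1 n := hv ▸ subset_verts hs
      refine mem_clos.2 ⟨hsub, fun h => K.empty_not_mem (h ▸ hs), hd s hs, ?_⟩
      intro T hT
      have h2 := (mem_coinSet.1 T.2).2.1
      have hTK : T.1 ∈ K.faces := K.down_closed s hs T.1 hT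
        (by intro h; rw [h] at h2; simp at h2)
      have hpot : T ∈ potAll n k K := by
        rw [mem_potAll]; intro T' hT'
        rw [Finset.mem_powersetCard] at hT'
        apply K.down_closed T.1 hTK T' hT'.1
        apply Finset.nonempty_iff_ne_empty.1
        apply Finset.card_pos.1
        omega
      rw [hX T hpot]
      simp [hTK]

lemma complexProb_eq_sum (n k : ℕ) (hn : 1 ≤ n) (p : ℕ → ℝ) (K : SComplex) :
    complexProb n k p K
      = ∑ X : {T // T ∈ coinSet n k} → Bool, if clos n k hn X = K then cw n k p X else 0 := by
  classical
  by_cases hgood : K.verts = Finset.Icc 1 n ∧ ∀ t ∈ K.faces, t.card ≤ k + 1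
  · have hcong : ∀ X : {T // T ∈ coinSet n k} → Bool,
        (if clos n k hn X = K then cw n k p X else 0)
          = if ∀ T ∈ potAll n k K, X T = decide (T.1 ∈ K.faces) then
              ∏ T : {T // T ∈ coinSet n k}, cwt p T.1 (X T) else 0 := by
      intro X
      rw [show cw n k p X = ∏ T : {T // T ∈ coinSet n k}, cwt p T.1 (X T) from rfl]
      exact if_congr (clos_eq_iff hn X K hgood.1 hgood.2) rfl rfl
    rw [Finset.sum_congr rfl fun X _ => hcong X,
      sum_cylinder (fun T : {T // T ∈ coinSet n k} => cwt p T.1)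
        (fun T => cwt_total p T.1) (potAll n k K) (fun T => decide (T.1 ∈ K.faces))]
    rw [complexProb, if_pos hgood]
    rw [← Finset.prod_fiberwise_of_maps_to (g := fun T : {T // T ∈ coinSet n k} => T.1.card - 1)
      (t := Finset.Icc 1 k) ?_ (fun T => cwt p T.1 (decide (T.1 ∈ K.faces)))]
    swap
    · intro T hT
      have h2 := (mem_coinSet.1 T.2).2.1
      have h3 := (mem_coinSet.1 T.2).2.2
      have hgoal : 1 ≤ T.1.card - 1 ∧ T.1.card - 1 ≤ k := by omega
      exact Finset.mem_Icc.2 hgoal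
    apply Finset.prod_congr rfl
    intro i hi
    rw [Finset.mem_Icc] at hi
    have hinner : ∏ T ∈ (potAll n k K).filter (fun T => T.1.card - 1 = i),
        cwt p T.1 (decide (T.1 ∈ K.faces))
        = ∏ σ ∈ potentialSimplices n i K, (if σ ∈ K.faces then p i else 1 - p i) := by
      apply Finset.prod_nbij (fun T => T.1)
      · intro T hT
        rw [Finset.mem_filter, mem_potAll] at hT
        have hpot : ∀ T' ∈ Finset.powersetCard (T.1.card - 1) T.1, T' ∈ K.faces := hT.1
        have hceq : T.1.card - 1 = i := hT.2
        have h2 := (mem_coinSet.1 T.2).2.1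
        have hc : T.1.card = i + 1 := by omega
        refine mem_potentialSimplices.2 ⟨(mem_coinSet.1 T.2).1, hc, ?_⟩
        intro t ht
        apply hpot t
        rwa [hceq]
      · intro T _ T' _ h
        exact Subtype.ext h
      · intro σ hσ
        rw [Finset.mem_coe, mem_potentialSimplices] at hσ
        have hmem : σ ∈ coinSet n k := mem_coinSet.2 ⟨hσ.1, by omega, by omega⟩
        refine ⟨⟨σ, hmem⟩, ?_, rfl⟩
        rw [Finset.mem_coe, Finset.mem_filter, mem_potAll]
        constructor
        · intro t ht
          exact hσ.2.2 t (by rw [hσ.2.1] at ht; simpa using ht)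
        · show σ.card - 1 = i
          have := hσ.2.1
          omega
      · intro T hT
        rw [Finset.mem_filter] at hT
        have h2 := (mem_coinSet.1 T.2).2.1
        have hceq : T.1.card - 1 = i := hT.2
        by_cases hm : T.1 ∈ K.faces <;> simp [cwt, hm, hceq]
    rw [hinner, Finset.prod_ite (fun _ => p i) (fun _ => 1 - p i),
      Finset.prod_const, Finset.prod_const]
    have hfil : (potentialSimplices n i K).filter (fun σ => σ ∈ K.faces) = K.simplices i := by
      ext t
      rw [Finset.mem_filter, mem_potentialSimplices, SComplex.simplices, Finset.mem_filter]
      constructor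
      · rintro ⟨⟨_, hc, _⟩, hm⟩
        exact ⟨hm, hc⟩
      · rintro ⟨hm, hc⟩
        refine ⟨⟨hgood.1 ▸ subset_verts hm, hc, ?_⟩, hm⟩
        intro t' ht'
        rw [Finset.mem_powersetCard] at ht'
        apply K.down_closed t hm t' ht'.1
        apply Finset.nonempty_iff_ne_empty.1
        apply Finset.card_pos.1
        omega
    have hfil2 : ((potentialSimplices n i K).filter (fun σ => ¬ σ ∈ K.faces)).card
        = (potentialSimplices n i K).card - K.s i := by
      have := Finset.card_filter_add_card_filter_not
        (s := potentialSimplices n i K) (fun σ => σ ∈ K.faces)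
      rw [hfil] at this
      unfold SComplex.s
      omega
    rw [hfil, hfil2]
    rfl
  · rw [complexProb, if_neg hgood]
    symm
    apply Finset.sum_eq_zero
    intro X _
    rw [if_neg]
    intro h
    exact hgood (h ▸ ⟨verts_clos hn X, fun t ht => (mem_clos.1 ht).2.2.1⟩)

lemma pr_eq_sum (n k : ℕ) (hn : 1 ≤ n) (p : ℕ → ℝ) (E : Set SComplex) :
    pr n k p E = ∑ X : {T // T ∈ coinSet n k} → Bool,
      if clos n k hn X ∈ E then cw n k p X else 0 := by
  classical
  unfold pr
  have hs : ∀ K ∉ Finset.image (clos n k hn) Finset.univ,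
      E.indicator (complexProb n k p) K = 0 := by
    intro K hK
    have h0 : complexProb n k p K = 0 := by
      rw [complexProb_eq_sum n k hn p K]
      apply Finset.sum_eq_zero
      intro X _
      rw [if_neg]
      intro h
      exact hK (Finset.mem_image.2 ⟨X, Finset.mem_univ X, h⟩)
    rw [Set.indicator_apply]
    split_ifs <;> simp [h0]
  rw [tsum_eq_sum hs]
  rw [Finset.sum_congr rfl fun K (_ : K ∈ _) => by
    rw [Set.indicator_apply, complexProb_eq_sum n k hn p K]]
  have hswap : ∀ K ∈ Finset.image (clos n k hn) Finset.univ,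
      (if K ∈ E then ∑ X : {T // T ∈ coinSet n k} → Bool,
          (if clos n k hn X = K then cw n k p X else 0) else 0)
        = ∑ X : {T // T ∈ coinSet n k} → Bool,
          (if clos n k hn X = K then (if K ∈ E then cw n k p X else 0) else 0) := by
    intro K _
    split_ifs with h
    · rfl
    · symm
      apply Finset.sum_eq_zero
      intro X _
      split_ifs with h2
      · rfl
      · rfl
  rw [Finset.sum_congr rfl hswap, Finset.sum_comm]
  apply Finset.sum_congr rfl
  intro X _
  rw [Finset.sum_eq_single_of_mem (clos n k hn X)
    (Finset.mem_image.2 ⟨X, Finset.mem_univ X, rfl⟩)]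
  · rw [if_pos rfl]
  · intro K _ hne
    rw [if_neg (fun h => hne h.symm)]

lemma prod_card_fiber (A : Finset (Finset ℕ)) (lo hi : ℕ)
    (h : ∀ t ∈ A, t.card ∈ Finset.Icc lo hi) (f : ℕ → ℝ) :
    ∏ t ∈ A, f t.card
      = ∏ j ∈ Finset.Icc lo hi, f j ^ (A.filter (fun t => t.card = j)).card := by
  rw [← Finset.prod_fiberwise_of_maps_to h (fun t => f t.card)]
  refine Finset.prod_congr rfl fun j hj => ?_
  have hconst : ∀ t ∈ A.filter (fun t => t.card = j), f t.card = f j := by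
    intro t ht
    have hc : t.card = j := (Finset.mem_filter.1 ht).2
    rw [hc]
  rw [Finset.prod_congr rfl hconst, Finset.prod_const]

lemma prod_subsets_card_ge (S : Finset ℕ) (c : ℕ) (f : ℕ → ℝ) :
    ∏ t ∈ S.powerset.filter (fun t => c ≤ t.card), f t.card
      = ∏ j ∈ Finset.Icc c S.card, f j ^ (S.card.choose j) := by
  rw [prod_card_fiber _ c S.card ?hmaps f]
  case hmaps =>
    intro t ht
    rw [Finset.mem_filter, Finset.mem_powerset] at ht
    exact Finset.mem_Icc.2 ⟨ht.2, Finset.card_le_card ht.1⟩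
  refine Finset.prod_congr rfl fun j hj => ?_
  rw [Finset.mem_Icc] at hj
  congr 1
  have hset : (S.powerset.filter (fun t => c ≤ t.card)).filter (fun t => t.card = j)
      = Finset.powersetCard j S := by
    ext t
    rw [Finset.mem_filter, Finset.mem_filter, Finset.mem_powerset, Finset.mem_powersetCard]
    constructor
    · rintro ⟨⟨h1, _⟩, h3⟩
      exact ⟨h1, h3⟩
    · rintro ⟨h1, h2⟩
      exact ⟨⟨h1, by omega⟩, h2⟩
  rw [hset, Finset.card_powersetCard]

lemma prod_cD (n k : ℕ) (p : ℕ → ℝ) (S : Finset ℕ) (hSn : S ⊆ Finset.Icc 1 n)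
    (hSk : S.card + 1 ≤ k + 1) (v c : ℕ) (hc : 1 ≤ c) (hv : v ∈ Finset.Icc 1 n) (hvS : v ∉ S)
    (D : Finset {T // T ∈ coinSet n k})
    (hiff : ∀ T : {T // T ∈ coinSet n k},
      T ∈ D ↔ T.1 ⊆ insert v S ∧ v ∈ T.1 ∧ c + 1 ≤ T.1.card) :
    ∏ T ∈ D, p (T.1.card - 1) = ∏ j ∈ Finset.Icc c S.card, p j ^ (S.card.choose j) := by
  classical
  have step1 : ∏ T ∈ D, p (T.1.card - 1)
      = ∏ t ∈ S.powerset.filter (fun t => c ≤ t.card), p t.card := by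
    apply Finset.prod_nbij (fun T => T.1.erase v)
    · intro T hT
      obtain ⟨hsub, hvT, hcard⟩ := (hiff T).1 hT
      have hce : (T.1.erase v).card = T.1.card - 1 := Finset.card_erase_of_mem hvT
      have hesub : T.1.erase v ⊆ S := by
        intro x hx
        obtain ⟨hxv, hxT⟩ := Finset.mem_erase.1 hx
        exact (Finset.mem_insert.1 (hsub hxT)).resolve_left hxv
      exact Finset.mem_filter.2 ⟨Finset.mem_powerset.2 hesub, by omega⟩
    · intro T hT T' hT' h
      obtain ⟨_, hvT, _⟩ := (hiff T).1 (Finset.mem_coe.1 hT)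
      obtain ⟨_, hvT', _⟩ := (hiff T').1 (Finset.mem_coe.1 hT')
      apply Subtype.ext
      have h' : T.1.erase v = T'.1.erase v := h
      rw [← Finset.insert_erase hvT, ← Finset.insert_erase hvT', h']
    · intro t ht
      rw [Finset.mem_coe, Finset.mem_filter, Finset.mem_powerset] at ht
      have hvt : v ∉ t := fun h => hvS (ht.1 h)
      have hcard : (insert v t).card = t.card + 1 := Finset.card_insert_of_notMem hvt
      have htS := Finset.card_le_card ht.1
      have hcoin : insert v t ∈ coinSet n k := by
        refine mem_coinSet.2 ⟨Finset.insert_subset hv (ht.1.trans hSn), by omega, by omega⟩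
      refine ⟨⟨insert v t, hcoin⟩, ?_, ?_⟩
      · rw [Finset.mem_coe, hiff]
        exact ⟨Finset.insert_subset_insert v ht.1, Finset.mem_insert_self v t, by
          show c + 1 ≤ (insert v t).card
          omega⟩
      · show (insert v t).erase v = t
        exact Finset.erase_insert hvt
    · intro T hT
      obtain ⟨_, hvT, _⟩ := (hiff T).1 hT
      show p (T.1.card - 1) = p ((T.1.erase v).card)
      rw [Finset.card_erase_of_mem hvT]
  rw [step1, prod_subsets_card_ge]

/-- Coins constrained by the event `A` (all `q`-simplices on `{1,…,m}` present). -/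
def cCA (n k m q : ℕ) : Finset {T // T ∈ coinSet n k} :=
  Finset.univ.filter fun T => T.1 ⊆ Finset.Icc 1 m ∧ T.1.card ≤ q + 1

lemma mem_cCA {n k m q : ℕ} {T : {T // T ∈ coinSet n k}} :
    T ∈ cCA n k m q ↔ T.1 ⊆ Finset.Icc 1 m ∧ T.1.card ≤ q + 1 := by
  simp [cCA]

/-- Coins forcing the simplex on `S` to be present. -/
def cCS (n k q : ℕ) (S : Finset ℕ) : Finset {T // T ∈ coinSet n k} :=
  Finset.univ.filter fun T => T.1 ⊆ S ∧ q + 2 ≤ T.1.card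

lemma mem_cCS {n k q : ℕ} {S : Finset ℕ} {T : {T // T ∈ coinSet n k}} :
    T ∈ cCS n k q S ↔ T.1 ⊆ S ∧ q + 2 ≤ T.1.card := by
  simp [cCS]

/-- Coins governing whether the cone `S ∪ {v}` is present. -/
def cD (n k q m : ℕ) (S : Finset ℕ) (v : ℕ) : Finset {T // T ∈ coinSet n k} :=
  Finset.univ.filter fun T => T.1 ⊆ insert v S ∧ v ∈ T.1 ∧ (v ≤ m → q + 2 ≤ T.1.card)

lemma mem_cD {n k q m : ℕ} {S : Finset ℕ} {v : ℕ} {T : {T // T ∈ coinSet n k}} :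
    T ∈ cD n k q m S v ↔ T.1 ⊆ insert v S ∧ v ∈ T.1 ∧ (v ≤ m → q + 2 ≤ T.1.card) := by
  simp [cD]

end CoinModel

end AuxiliaryCoinModel

/-- the conditional probability `e:prob.free.simplex`: in the
multi-parameter random simplicial complex `K(n; p₁,…,p_{k*+1})` with `p₁ = ⋯ = p_{q-1} = 1`,
fix `q+1 ≤ m ≤ n` designated vertices `{1,…,m}` and let `A` be the event that all
`C(m,q+1)` `q`-simplices on these vertices are present. Then, conditionally on `A`, any fixed
set `S` of `k*+1` of the designated vertices forms a free `k*`-simplex with probability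
`∏_{i=q+1}^{k*} p_i^{C(k*+1,i+1)} (1-∏_{i=q+1}^{k*+1} p_i^{C(k*+1,i)})^{m-(k*+1)}
(1-∏_{i=q}^{k*+1} p_i^{C(k*+1,i)})^{n-m}`, independently of the choice of the `k*+1`
vertices (stated here as `P(A ∩ {S is a free k*-simplex}) = (formula)·P(A)`). -/
theorem stmt_17 (kstar q : ℕ) (hq1 : 1 ≤ q) (hqk : q ≤ kstar)
    (p : ℕ → ℝ) (hp : ∀ i, 1 ≤ i → i ≤ kstar + 1 → p i ∈ Set.Icc (0 : ℝ) 1)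
    (hp1 : ∀ i, 1 ≤ i → i < q → p i = 1)
    (m n : ℕ) (hqm : q + 1 ≤ m) (hmn : m ≤ n)
    (S : Finset ℕ) (hS : S ⊆ Finset.Icc 1 m) (hScard : S.card = kstar + 1) :
    pr n (kstar + 1) p
        {K | (∀ t ∈ (Finset.Icc 1 m).powersetCard (q + 1), t ∈ K.faces) ∧
          S ∈ K.faces ∧ ∀ u ∈ K.faces, S ⊆ u → u = S} =
      (∏ i ∈ Finset.Icc (q + 1) kstar, p i ^ ((kstar + 1).choose (i + 1))) *
        (1 - ∏ i ∈ Finset.Icc (q + 1) (kstar + 1), p i ^ ((kstar + 1).choose i)) ^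
          (m - (kstar + 1)) *
        (1 - ∏ i ∈ Finset.Icc q (kstar + 1), p i ^ ((kstar + 1).choose i)) ^ (n - m) *
        pr n (kstar + 1) p
          {K | ∀ t ∈ (Finset.Icc 1 m).powersetCard (q + 1), t ∈ K.faces} := by
  classical
  have hn1 : 1 ≤ n := by omega
  have hIccmn : Finset.Icc 1 m ⊆ Finset.Icc 1 n := Finset.Icc_subset_Icc_right hmn
  have hSn : S ⊆ Finset.Icc 1 n := hS.trans hIccmn
  have hcardIccm : (Finset.Icc 1 m).card = m := by rw [Nat.card_Icc]; omega
  -- event A at the coin level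
  have hA : ∀ X : {T // T ∈ coinSet n (kstar + 1)} → Bool,
      (∀ t ∈ (Finset.Icc 1 m).powersetCard (q + 1), t ∈ (clos n (kstar + 1) hn1 X).faces)
        ↔ ∀ T ∈ cCA n (kstar + 1) m q, X T = true := by
    intro X
    constructor
    · intro h T hT
      obtain ⟨hTm, hTq⟩ := mem_cCA.1 hT
      obtain ⟨u, hu1, hu2, hu3⟩ := Finset.exists_subsuperset_card_eq hTm hTq
        (by omega : q + 1 ≤ (Finset.Icc 1 m).card)
      have hu : u ∈ (clos n (kstar + 1) hn1 X).faces :=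
        h u (Finset.mem_powersetCard.2 ⟨hu2, hu3⟩)
      exact (mem_clos.1 hu).2.2.2 T hu1
    · intro h t ht
      rw [Finset.mem_powersetCard] at ht
      refine mem_clos.2 ⟨ht.1.trans hIccmn, ?_, by omega, ?_⟩
      · intro he
        rw [he] at ht
        simp at ht
      · intro T hT
        have h2 := (mem_coinSet.1 T.2).2.1
        have hcle := Finset.card_le_card hT
        exact h T (mem_cCA.2 ⟨hT.trans ht.1, by omega⟩)
  -- the main event at the coin level
  have hE : ∀ X : {T // T ∈ coinSet n (kstar + 1)} → Bool,
      ((∀ t ∈ (Finset.Icc 1 m).powersetCard (q + 1), t ∈ (clos n (kstar + 1) hn1 X).faces) ∧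
          S ∈ (clos n (kstar + 1) hn1 X).faces ∧
          ∀ u ∈ (clos n (kstar + 1) hn1 X).faces, S ⊆ u → u = S)
        ↔ ((∀ T ∈ cCA n (kstar + 1) m q ∪ cCS n (kstar + 1) q S, X T = true) ∧
            ∀ v ∈ Finset.Icc 1 n \ S, ¬ ∀ T ∈ cD n (kstar + 1) q m S v, X T = true) := by
    intro X
    constructor
    · rintro ⟨h1, h2, h3⟩
      constructor
      · intro T hT
        rcases Finset.mem_union.1 hT with hT | hT
        · exact (hA X).1 h1 T hT
        · exact (mem_clos.1 h2).2.2.2 T (mem_cCS.1 hT).1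
      · intro v hv hall
        obtain ⟨hv1, hvS⟩ := Finset.mem_sdiff.1 hv
        have h1v : 1 ≤ v := (Finset.mem_Icc.1 hv1).1
        have hins : insert v S ∈ (clos n (kstar + 1) hn1 X).faces := by
          refine mem_clos.2 ⟨Finset.insert_subset hv1 hSn, Finset.insert_ne_empty v S, ?_, ?_⟩
          · rw [Finset.card_insert_of_notMem hvS, hScard]
          · intro T hT
            have h2c := (mem_coinSet.1 T.2).2.1
            by_cases hvT : v ∈ T.1
            · by_cases hvm : v ≤ m
              · by_cases hcard : q + 2 ≤ T.1.card
                · exact hall T (mem_cD.2 ⟨hT, hvT, fun _ => hcard⟩)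
                · refine (hA X).1 h1 T (mem_cCA.2 ⟨?_, by omega⟩)
                  exact hT.trans (Finset.insert_subset (Finset.mem_Icc.2 ⟨h1v, hvm⟩) hS)
              · exact hall T (mem_cD.2 ⟨hT, hvT, fun h => absurd h hvm⟩)
            · have hTS : T.1 ⊆ S := by
                intro x hx
                exact (Finset.mem_insert.1 (hT hx)).resolve_left (fun h => hvT (h ▸ hx))
              exact (mem_clos.1 h2).2.2.2 T hTS
        have heq := h3 (insert v S) hins (Finset.subset_insert v S)
        exact hvS (heq ▸ Finset.mem_insert_self v S)
    · rintro ⟨hCC, hfree⟩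
      have hCA : ∀ T ∈ cCA n (kstar + 1) m q, X T = true :=
        fun T h => hCC T (Finset.mem_union_left _ h)
      have hCSt : ∀ T ∈ cCS n (kstar + 1) q S, X T = true :=
        fun T h => hCC T (Finset.mem_union_right _ h)
      have hSmem : S ∈ (clos n (kstar + 1) hn1 X).faces := by
        refine mem_clos.2 ⟨hSn, ?_, by omega, ?_⟩
        · intro he
          rw [he] at hScard
          simp at hScard
        · intro T hT
          have h2c := (mem_coinSet.1 T.2).2.1
          by_cases hcard : q + 2 ≤ T.1.card
          · exact hCSt T (mem_cCS.2 ⟨hT, hcard⟩)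
          · exact hCA T (mem_cCA.2 ⟨hT.trans hS, by omega⟩)
      refine ⟨(hA X).2 hCA, hSmem, ?_⟩
      intro u hu hSu
      by_contra hne
      obtain ⟨v, hvu, hvS⟩ := Finset.exists_of_ssubset
        (Finset.ssubset_iff_subset_ne.2 ⟨hSu, fun h => hne h.symm⟩)
      have hvn : v ∈ Finset.Icc 1 n := (mem_clos.1 hu).1 hvu
      refine hfree v (Finset.mem_sdiff.2 ⟨hvn, hvS⟩) ?_
      intro T hT
      have hsub : T.1 ⊆ u := (mem_cD.1 hT).1.trans (Finset.insert_subset hvu hSu)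
      exact (mem_clos.1 hu).2.2.2 T hsub
  -- disjointness of the coin groups
  have hdisjAS : Disjoint (cCA n (kstar + 1) m q) (cCS n (kstar + 1) q S) := by
    rw [Finset.disjoint_left]
    intro T hTA hTS
    have h1 := (mem_cCA.1 hTA).2
    have h2 := (mem_cCS.1 hTS).2
    omega
  have hdisjD : ∀ v ∈ Finset.Icc 1 n \ S, ∀ u ∈ Finset.Icc 1 n \ S, v ≠ u →
      Disjoint (cD n (kstar + 1) q m S v) (cD n (kstar + 1) q m S u) := by
    intro v hv u hu hne
    obtain ⟨_, hvS⟩ := Finset.mem_sdiff.1 hv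
    rw [Finset.disjoint_left]
    intro T hTv hTu
    obtain ⟨hsubv, hvT, _⟩ := mem_cD.1 hTv
    obtain ⟨hsubu, huT, _⟩ := mem_cD.1 hTu
    rcases Finset.mem_insert.1 (hsubu hvT) with h | h
    · exact hne h
    · exact hvS h
  have hdisjCD : ∀ v ∈ Finset.Icc 1 n \ S,
      Disjoint (cCA n (kstar + 1) m q ∪ cCS n (kstar + 1) q S) (cD n (kstar + 1) q m S v) := by
    intro v hv
    obtain ⟨hv1, hvS⟩ := Finset.mem_sdiff.1 hv
    rw [Finset.disjoint_left]
    intro T hTC hTD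
    obtain ⟨hsub, hvT, hcond⟩ := mem_cD.1 hTD
    rcases Finset.mem_union.1 hTC with h | h
    · obtain ⟨hsubm, hcard⟩ := mem_cCA.1 h
      by_cases hvm : v ≤ m
      · have := hcond hvm
        omega
      · exact hvm (Finset.mem_Icc.1 (hsubm hvT)).2
    · exact hvS ((mem_cCS.1 h).1 hvT)
  -- rewrite both probabilities as coin sums
  rw [pr_eq_sum n (kstar + 1) hn1 p
      {K | (∀ t ∈ (Finset.Icc 1 m).powersetCard (q + 1), t ∈ K.faces) ∧
        S ∈ K.faces ∧ ∀ u ∈ K.faces, S ⊆ u → u = S},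
    pr_eq_sum n (kstar + 1) hn1 p
      {K | ∀ t ∈ (Finset.Icc 1 m).powersetCard (q + 1), t ∈ K.faces}]
  have htermL : ∀ X : {T // T ∈ coinSet n (kstar + 1)} → Bool,
      (@ite ℝ (clos n (kstar + 1) hn1 X ∈
          {K : SComplex | (∀ t ∈ (Finset.Icc 1 m).powersetCard (q + 1), t ∈ K.faces) ∧
            S ∈ K.faces ∧ ∀ u ∈ K.faces, S ⊆ u → u = S})
        (Classical.propDecidable _) (cw n (kstar + 1) p X) 0)
      = (if (∀ T ∈ cCA n (kstar + 1) m q ∪ cCS n (kstar + 1) q S, X T = true) ∧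
            (∀ v ∈ Finset.Icc 1 n \ S, ¬ ∀ T ∈ cD n (kstar + 1) q m S v, X T = true)
          then ∏ T : {T // T ∈ coinSet n (kstar + 1)}, cwt p T.1 (X T) else 0) := by
    intro X
    have hiff := hE X
    split_ifs with h1 h2 h3
    · rfl
    · exact absurd (hiff.1 h1) h2
    · exact absurd (hiff.2 h3) h1
    · rfl
  have htermR : ∀ X : {T // T ∈ coinSet n (kstar + 1)} → Bool,
      (@ite ℝ (clos n (kstar + 1) hn1 X ∈
          {K : SComplex | ∀ t ∈ (Finset.Icc 1 m).powersetCard (q + 1), t ∈ K.faces})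
        (Classical.propDecidable _) (cw n (kstar + 1) p X) 0)
      = (if ∀ T ∈ cCA n (kstar + 1) m q, X T = (fun _ => true) T
          then ∏ T : {T // T ∈ coinSet n (kstar + 1)}, cwt p T.1 (X T) else 0) := by
    intro X
    have hiff := hA X
    split_ifs with h1 h2 h3
    · rfl
    · exact absurd (hiff.1 h1) h2
    · exact absurd (hiff.2 h3) h1
    · rfl
  rw [Finset.sum_congr rfl fun X _ => htermL X,
    Finset.sum_congr rfl fun X _ => htermR X,
    sum_free (fun T : {T // T ∈ coinSet n (kstar + 1)} => cwt p T.1)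
      (fun T => cwt_total p T.1) (Finset.Icc 1 n \ S) (cD n (kstar + 1) q m S) hdisjD
      (cCA n (kstar + 1) m q ∪ cCS n (kstar + 1) q S) hdisjCD,
    sum_cylinder (fun T : {T // T ∈ coinSet n (kstar + 1)} => cwt p T.1)
      (fun T => cwt_total p T.1) (cCA n (kstar + 1) m q) (fun _ => true)]
  have hcwt : ∀ T : {T // T ∈ coinSet n (kstar + 1)}, cwt p T.1 true = p (T.1.card - 1) :=
    fun T => rfl
  simp only [hcwt]
  -- value of the CS product
  have himg : (cCS n (kstar + 1) q S).image Subtype.val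
      = S.powerset.filter (fun t => q + 2 ≤ t.card) := by
    ext t
    simp only [Finset.mem_image, Finset.mem_filter, Finset.mem_powerset]
    constructor
    · rintro ⟨T, hT, rfl⟩
      exact mem_cCS.1 hT
    · rintro ⟨h1, h2⟩
      have hle := Finset.card_le_card h1
      have hcoin : t ∈ coinSet n (kstar + 1) :=
        mem_coinSet.2 ⟨h1.trans hSn, by omega, by omega⟩
      exact ⟨⟨t, hcoin⟩, mem_cCS.2 ⟨h1, h2⟩, rfl⟩
  have hCSval : ∏ T ∈ cCS n (kstar + 1) q S, p (T.1.card - 1)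
      = ∏ j ∈ Finset.Icc (q + 2) (kstar + 1), p (j - 1) ^ ((kstar + 1).choose j) := by
    have h1 : ∏ t ∈ (cCS n (kstar + 1) q S).image Subtype.val, p (t.card - 1)
        = ∏ T ∈ cCS n (kstar + 1) q S, p (T.1.card - 1) :=
      Finset.prod_image (fun x _ y _ h => Subtype.ext h)
    rw [← h1, himg]
    have h2 := prod_subsets_card_ge S (q + 2) (fun j => p (j - 1))
    rw [hScard] at h2
    exact h2
  have hCSval2 : ∏ j ∈ Finset.Icc (q + 2) (kstar + 1), p (j - 1) ^ ((kstar + 1).choose j)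
      = ∏ i ∈ Finset.Icc (q + 1) kstar, p i ^ ((kstar + 1).choose (i + 1)) := by
    refine Finset.prod_nbij' (fun j => j - 1) (fun i => i + 1) ?_ ?_ ?_ ?_ ?_
    · intro a ha
      rw [Finset.mem_Icc] at ha
      have hmem : a - 1 ∈ Finset.Icc (q + 1) kstar := Finset.mem_Icc.2 ⟨by omega, by omega⟩
      exact hmem
    · intro a ha
      rw [Finset.mem_Icc] at ha
      have hmem : a + 1 ∈ Finset.Icc (q + 2) (kstar + 1) :=
        Finset.mem_Icc.2 ⟨by omega, by omega⟩
      exact hmem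
    · intro a ha
      rw [Finset.mem_Icc] at ha
      show a - 1 + 1 = a
      omega
    · intro a ha
      show a + 1 - 1 = a
      omega
    · intro a ha
      rw [Finset.mem_Icc] at ha
      show p (a - 1) ^ ((kstar + 1).choose a) = p (a - 1) ^ ((kstar + 1).choose (a - 1 + 1))
      rw [show a - 1 + 1 = a from by omega]
  -- value of the D products
  have hDm : ∀ v ∈ Finset.Icc 1 m \ S, ∏ T ∈ cD n (kstar + 1) q m S v, p (T.1.card - 1)
      = ∏ j ∈ Finset.Icc (q + 1) (kstar + 1), p j ^ ((kstar + 1).choose j) := by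
    intro v hv
    obtain ⟨hv1, hvS⟩ := Finset.mem_sdiff.1 hv
    rw [Finset.mem_Icc] at hv1
    have h := prod_cD n (kstar + 1) p S hSn (by omega) v (q + 1) (by omega)
      (Finset.mem_Icc.2 ⟨hv1.1, by omega⟩) hvS (cD n (kstar + 1) q m S v) ?_
    · rw [hScard] at h
      exact h
    · intro T
      rw [mem_cD]
      constructor
      · rintro ⟨a, b, c⟩
        exact ⟨a, b, c hv1.2⟩
      · rintro ⟨a, b, c⟩
        exact ⟨a, b, fun _ => c⟩
  have hDn : ∀ v ∈ Finset.Icc (m + 1) n, ∏ T ∈ cD n (kstar + 1) q m S v, p (T.1.card - 1)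
      = ∏ j ∈ Finset.Icc q (kstar + 1), p j ^ ((kstar + 1).choose j) := by
    intro v hv
    rw [Finset.mem_Icc] at hv
    have hvS : v ∉ S := fun h => by
      have := (Finset.mem_Icc.1 (hS h)).2
      omega
    have h := prod_cD n (kstar + 1) p S hSn (by omega) v 1 le_rfl
      (Finset.mem_Icc.2 ⟨by omega, hv.2⟩) hvS (cD n (kstar + 1) q m S v) ?_
    · rw [hScard] at h
      rw [h]
      have hunion : Finset.Icc 1 (kstar + 1)
          = Finset.Icc 1 (q - 1) ∪ Finset.Icc q (kstar + 1) := by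
        ext x
        simp only [Finset.mem_Icc, Finset.mem_union]
        omega
      have hdisj3 : Disjoint (Finset.Icc 1 (q - 1)) (Finset.Icc q (kstar + 1)) := by
        rw [Finset.disjoint_left]
        intro a ha hb
        rw [Finset.mem_Icc] at ha hb
        omega
      rw [hunion, Finset.prod_union hdisj3]
      have hone : ∏ j ∈ Finset.Icc 1 (q - 1), p j ^ ((kstar + 1).choose j) = 1 := by
        apply Finset.prod_eq_one
        intro j hj
        rw [Finset.mem_Icc] at hj
        rw [hp1 j hj.1 (by omega), one_pow]
      rw [hone, one_mul]
    · intro T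
      rw [mem_cD]
      have h2c := (mem_coinSet.1 T.2).2.1
      constructor
      · rintro ⟨a, b, _⟩
        exact ⟨a, b, by omega⟩
      · rintro ⟨a, b, _⟩
        exact ⟨a, b, fun hvm => absurd hvm (by omega)⟩
  -- split the outside-vertex product
  have hVsplit : Finset.Icc 1 n \ S = (Finset.Icc 1 m \ S) ∪ Finset.Icc (m + 1) n := by
    ext v
    simp only [Finset.mem_sdiff, Finset.mem_Icc, Finset.mem_union]
    constructor
    · rintro ⟨⟨h1v, hvn⟩, hvS⟩
      by_cases hvm : v ≤ m
      · exact Or.inl ⟨⟨h1v, hvm⟩, hvS⟩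
      · exact Or.inr ⟨by omega, hvn⟩
    · rintro (⟨⟨h1v, hvm⟩, hvS⟩ | ⟨hm1, hvn⟩)
      · exact ⟨⟨h1v, by omega⟩, hvS⟩
      · refine ⟨⟨by omega, hvn⟩, fun hvS => ?_⟩
        have := (Finset.mem_Icc.1 (hS hvS)).2
        omega
  have hdisj2 : Disjoint (Finset.Icc 1 m \ S) (Finset.Icc (m + 1) n) := by
    rw [Finset.disjoint_left]
    intro a ha hb
    have := (Finset.mem_Icc.1 (Finset.mem_sdiff.1 ha).1).2
    have := (Finset.mem_Icc.1 hb).1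
    omega
  have hprodm : ∏ v ∈ Finset.Icc 1 m \ S,
      (1 - ∏ T ∈ cD n (kstar + 1) q m S v, p (T.1.card - 1))
      = (1 - ∏ j ∈ Finset.Icc (q + 1) (kstar + 1), p j ^ ((kstar + 1).choose j))
          ^ (m - (kstar + 1)) := by
    have hcon : ∀ v ∈ Finset.Icc 1 m \ S,
        (1 - ∏ T ∈ cD n (kstar + 1) q m S v, p (T.1.card - 1))
          = (1 - ∏ j ∈ Finset.Icc (q + 1) (kstar + 1), p j ^ ((kstar + 1).choose j)) :=
      fun v hv => by rw [hDm v hv]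
    rw [Finset.prod_congr rfl hcon, Finset.prod_const]
    congr 1
    rw [Finset.card_sdiff_of_subset hS, hcardIccm, hScard]
  have hprodn : ∏ v ∈ Finset.Icc (m + 1) n,
      (1 - ∏ T ∈ cD n (kstar + 1) q m S v, p (T.1.card - 1))
      = (1 - ∏ j ∈ Finset.Icc q (kstar + 1), p j ^ ((kstar + 1).choose j)) ^ (n - m) := by
    have hcon : ∀ v ∈ Finset.Icc (m + 1) n,
        (1 - ∏ T ∈ cD n (kstar + 1) q m S v, p (T.1.card - 1))
          = (1 - ∏ j ∈ Finset.Icc q (kstar + 1), p j ^ ((kstar + 1).choose j)) :=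
      fun v hv => by rw [hDn v hv]
    rw [Finset.prod_congr rfl hcon, Finset.prod_const]
    congr 1
    rw [Nat.card_Icc]
    omega
  rw [Finset.prod_union hdisjAS, hCSval, hCSval2, hVsplit, Finset.prod_union hdisj2,
    hprodm, hprodn]
  ring
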